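/- arXiv:1910.06377 — 3 statements merged into one kernel-verified Lean document; each statement's English description precedes it below -/
import Mathlib

section
/- Let n ≥ 3 and let p₁, p₂, p₃ be positive integers with n = p₁+p₂+p₃ and gcd(p₁,p₂,p₃) = 1. The Cayley graph G(p₁,p₂,p₃) contains a cycle of length 4 if and only if the triangle T(p₁,p₂,p₃) is isosceles or right, i.e., if and only if (p₁ = p₂ or p₂ = p₃ or p₁ = p₃) or (2p₁ = n or 2p₂ = n or 2p₃ = n). -/
open DihedralGroup

/-- The Cayley graph `G(p₁,p₂,p₃)` of the dihedral group `DihedralGroup n` with respect to the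
three reflections `a = sr 0`, `b = sr p₃`, `c = sr (-p₂)` coming from the sides of the rational
triangle `T(p₁,p₂,p₃)`: `x` is adjacent to `y` iff `y = g * x` for some `g ∈ {a, b, c}`. -/
def billiardGraph (n p₂ p₃ : ℕ) : SimpleGraph (DihedralGroup n) where
  Adj x y := x ≠ y ∧ ∃ g ∈ ({sr 0, sr (p₃ : ZMod n), sr (-(p₂ : ZMod n))} :
    Set (DihedralGroup n)), y = g * x
  symm := ⟨by
    rintro x y ⟨hxy, g, hg, rfl⟩
    refine ⟨fun h => hxy h.symm, g, hg, ?_⟩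
    simp only [Set.mem_insert_iff, Set.mem_singleton_iff] at hg
    obtain rfl | rfl | rfl := hg <;>
      rw [← mul_assoc, sr_mul_sr, sub_self, ← one_def, one_mul]⟩
  loopless := ⟨fun x h => h.1 rfl⟩

/-!
The generators are involutions, so a 4-cycle through `x` is `x, s_i x, s_j s_i x, s_k s_j s_i x`
with `s_l s_k s_j s_i = 1`, `i ≠ j` and `j ≠ k`, where `s_j = sr j`. Since
`sr j * sr i = r (i - j)`, this relation reads `i + k = j + l` in `ZMod n`. Lifting the mirror
indices `0, p₃, -p₂ ≡ p₁ + p₃` to `[0, n)`, the relation says that `i + k - (j + l)` is `0`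
or `±n`, and a finite linear case analysis identifies the solutions with isosceles or right
triangles.
-/

theorem SimpleGraph.exists_isCycle_length_four_iff {V : Type*} (G : SimpleGraph V) :
    (∃ (v : V) (w : G.Walk v v), w.IsCycle ∧ w.length = 4) ↔
      ∃ a b c d, G.Adj a b ∧ G.Adj b c ∧ G.Adj c d ∧ G.Adj d a ∧ a ≠ c ∧ b ≠ d := by
  constructor
  · rintro ⟨v, w, hw, hlen⟩
    have hlast : w.getVert 4 = v := hlen ▸ w.getVert_length
    refine ⟨w.getVert 0, w.getVert 1, w.getVert 2, w.getVert 3,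
      w.adj_getVert_succ (by omega), w.adj_getVert_succ (by omega),
      w.adj_getVert_succ (by omega), ?_,
      hw.getVert_sub_one_ne_getVert_add_one (i := 1) (by omega),
      hw.getVert_sub_one_ne_getVert_add_one (i := 2) (by omega)⟩
    simpa [hlast] using w.adj_getVert_succ (i := 3) (by omega)
  · rintro ⟨a, b, c, d, hab, hbc, hcd, hda, hac, hbd⟩
    refine ⟨a, .cons hab (.cons hbc (.cons hcd (.cons hda .nil))), ?_, rfl⟩
    simp [Walk.cons_isCycle_iff, hab.ne, hbc.ne, hcd.ne, hda.ne, hab.ne.symm, hda.ne.symm, hac,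
      hac.symm, hbd]

theorem ZMod.natCast_eq_natCast_iff_of_lt_two_mul {n a b : ℕ} (ha : a < 2 * n) (hb : b < 2 * n) :
    (a : ZMod n) = b ↔ a = b ∨ a = b + n ∨ b = a + n := by
  rw [ZMod.natCast_eq_natCast_iff']
  have ha' := Nat.div_add_mod a n
  have hb' := Nat.div_add_mod b n
  have := Nat.mod_lt a (by omega : 0 < n)
  have := Nat.mod_lt b (by omega : 0 < n)
  have : a / n < 2 := Nat.div_lt_of_lt_mul (by omega)
  have : b / n < 2 := Nat.div_lt_of_lt_mul (by omega)
  interval_cases a / n <;> interval_cases b / n <;> omega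

theorem DihedralGroup.sr_mul_ne_self {n : ℕ} (i : ZMod n) (x : DihedralGroup n) :
    sr i * x ≠ x := by
  rw [Ne, mul_eq_right, one_def]
  nofun

def billiardMirrors (n p₂ p₃ : ℕ) : Set (ZMod n) := {0, (p₃ : ZMod n), -(p₂ : ZMod n)}

def billiardMirrorLifts (p₁ p₃ : ℕ) : Set ℕ := {0, p₃, p₁ + p₃}

variable {n p₁ p₂ p₃ : ℕ}

theorem billiardGraph_adj {x y : DihedralGroup n} :
    (billiardGraph n p₂ p₃).Adj x y ↔ ∃ j ∈ billiardMirrors n p₂ p₃, y = sr j * x := by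
  simp only [billiardGraph, billiardMirrors, Set.mem_insert_iff, Set.mem_singleton_iff,
    exists_eq_or_imp, exists_eq_left]
  constructor
  · exact fun h => h.2
  · intro h
    refine ⟨?_, h⟩
    rcases h with rfl | rfl | rfl <;> exact (sr_mul_ne_self _ _).symm

theorem billiardGraph_exists_isCycle_length_four_iff :
    (∃ (v : DihedralGroup n) (w : (billiardGraph n p₂ p₃).Walk v v),
        w.IsCycle ∧ w.length = 4) ↔
      ∃ i ∈ billiardMirrors n p₂ p₃, ∃ j ∈ billiardMirrors n p₂ p₃,
        ∃ k ∈ billiardMirrors n p₂ p₃, ∃ l ∈ billiardMirrors n p₂ p₃,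
          i ≠ j ∧ j ≠ k ∧ i + k = j + l := by
  simp only [SimpleGraph.exists_isCycle_length_four_iff, billiardGraph_adj]
  constructor
  · rintro ⟨a, -, -, -, ⟨i, hi, rfl⟩, ⟨j, hj, rfl⟩, ⟨k, hk, rfl⟩, ⟨l, hl, hclose⟩, hac,
      hbd⟩
    simp only [← mul_assoc, sr_mul_sr, sr_mul_r] at hclose hac hbd
    refine ⟨i, hi, j, hj, k, hk, l, hl, ?_, ?_, ?_⟩
    · rintro rfl
      simp at hac
    · rintro rfl
      simp at hbd
    · rw [eq_comm, mul_eq_right, ← r_zero, r.injEq] at hclose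
      linear_combination hclose
  · rintro ⟨i, hi, j, hj, k, hk, l, hl, hij, hjk, hrel⟩
    refine ⟨1, sr i, r (i - j), sr (k + (i - j)), ⟨i, hi, by simp⟩, ⟨j, hj, by simp⟩,
      ⟨k, hk, by simp⟩, ⟨l, hl, ?_⟩, ?_, ?_⟩
    · rw [sr_mul_sr, ← r_zero]
      congr 1
      linear_combination -hrel
    · rw [Ne, ← r_zero, r.injEq, eq_comm, sub_eq_zero]
      exact hij
    · rw [Ne, sr.injEq]
      contrapose! hjk
      linear_combination hjk

theorem billiardMirrors_eq_image (hsum : n = p₁ + p₂ + p₃) :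
    billiardMirrors n p₂ p₃ = Nat.cast '' billiardMirrorLifts p₁ p₃ := by
  have hn : ((p₁ + p₂ + p₃ : ℕ) : ZMod n) = 0 := hsum ▸ ZMod.natCast_self n
  have hp₂ : -(p₂ : ZMod n) = ((p₁ + p₃ : ℕ) : ZMod n) := by
    push_cast at hn ⊢
    linear_combination -hn
  simp [billiardMirrors, billiardMirrorLifts, Set.image_insert_eq, hp₂]

theorem exists_billiardMirrors_relation_iff (hp₂ : 0 < p₂) (hsum : n = p₁ + p₂ + p₃) :
    (∃ i ∈ billiardMirrors n p₂ p₃, ∃ j ∈ billiardMirrors n p₂ p₃,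
        ∃ k ∈ billiardMirrors n p₂ p₃, ∃ l ∈ billiardMirrors n p₂ p₃,
          i ≠ j ∧ j ≠ k ∧ i + k = j + l) ↔
      ∃ i ∈ billiardMirrorLifts p₁ p₃, ∃ j ∈ billiardMirrorLifts p₁ p₃,
        ∃ k ∈ billiardMirrorLifts p₁ p₃, ∃ l ∈ billiardMirrorLifts p₁ p₃,
          i ≠ j ∧ j ≠ k ∧ (i + k = j + l ∨ i + k = j + l + n ∨ j + l = i + k + n) := by
  have lt_of_mem : ∀ m ∈ billiardMirrorLifts p₁ p₃, m < n := by
    simp only [billiardMirrorLifts, Set.mem_insert_iff, Set.mem_singleton_iff]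
    omega
  simp only [billiardMirrors_eq_image hsum, Set.exists_mem_image]
  refine exists_congr fun i => and_congr_right fun hi => exists_congr fun j =>
    and_congr_right fun hj => exists_congr fun k => and_congr_right fun hk =>
    exists_congr fun l => and_congr_right fun hl => ?_
  have := lt_of_mem i hi
  have := lt_of_mem j hj
  have := lt_of_mem k hk
  have := lt_of_mem l hl
  rw [← Nat.cast_add, ← Nat.cast_add, Ne, Ne,
    ZMod.natCast_eq_natCast_iff_of_lt_two_mul (by omega) (by omega),
    ZMod.natCast_eq_natCast_iff_of_lt_two_mul (by omega) (by omega),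
    ZMod.natCast_eq_natCast_iff_of_lt_two_mul (by omega) (by omega)]
  omega

theorem exists_mirror_relation_iff_isosceles_or_right (hp₁ : 0 < p₁) (hp₂ : 0 < p₂)
    (hp₃ : 0 < p₃) (hsum : n = p₁ + p₂ + p₃) :
    (∃ i ∈ billiardMirrorLifts p₁ p₃, ∃ j ∈ billiardMirrorLifts p₁ p₃,
        ∃ k ∈ billiardMirrorLifts p₁ p₃, ∃ l ∈ billiardMirrorLifts p₁ p₃,
          i ≠ j ∧ j ≠ k ∧ (i + k = j + l ∨ i + k = j + l + n ∨ j + l = i + k + n)) ↔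
      ((p₁ = p₂ ∨ p₂ = p₃ ∨ p₁ = p₃) ∨ (2 * p₁ = n ∨ 2 * p₂ = n ∨ 2 * p₃ = n)) := by
  simp only [billiardMirrorLifts, Set.mem_insert_iff, Set.mem_singleton_iff]
  constructor
  · rintro ⟨i, hi, j, hj, k, hk, l, hl, hij, hjk, hrel⟩
    omega
  · rintro ((h | h | h) | (h | h | h))
    · exact ⟨p₃, by simp, p₁ + p₃, by simp, 0, by simp, p₁ + p₃, by simp, by omega⟩
    · exact ⟨p₃, by simp, 0, by simp, p₁ + p₃, by simp, 0, by simp, by omega⟩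
    · exact ⟨0, by simp, p₃, by simp, p₁ + p₃, by simp, p₃, by simp, by omega⟩
    · exact ⟨p₃, by simp, p₁ + p₃, by simp, p₃, by simp, p₁ + p₃, by simp, by omega⟩
    · exact ⟨p₁ + p₃, by simp, 0, by simp, p₁ + p₃, by simp, 0, by simp, by omega⟩
    · exact ⟨p₃, by simp, 0, by simp, p₃, by simp, 0, by simp, by omega⟩

theorem length_four_cycle_iff_isosceles_or_right_general
    (n p₁ p₂ p₃ : ℕ)
    (hp₁ : 0 < p₁) (hp₂ : 0 < p₂) (hp₃ : 0 < p₃)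
    (hsum : n = p₁ + p₂ + p₃) :
    (∃ (v : DihedralGroup n) (w : (billiardGraph n p₂ p₃).Walk v v),
        w.IsCycle ∧ w.length = 4) ↔
      ((p₁ = p₂ ∨ p₂ = p₃ ∨ p₁ = p₃) ∨ (2 * p₁ = n ∨ 2 * p₂ = n ∨ 2 * p₃ = n)) := by
  rw [billiardGraph_exists_isCycle_length_four_iff, exists_billiardMirrors_relation_iff hp₂ hsum,
    exists_mirror_relation_iff_isosceles_or_right hp₁ hp₂ hp₃ hsum]

/-- `G(p₁,p₂,p₃)` has a cycle of length 4 iff the triangle `T(p₁,p₂,p₃)` is isosceles or right. -/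
theorem length_four_cycle_iff_isosceles_or_right
    (n p₁ p₂ p₃ : ℕ) (hn : 3 ≤ n)
    (hp₁ : 0 < p₁) (hp₂ : 0 < p₂) (hp₃ : 0 < p₃)
    (hsum : n = p₁ + p₂ + p₃)
    (hgcd : Nat.gcd p₁ (Nat.gcd p₂ p₃) = 1) :
    (∃ (v : DihedralGroup n) (w : (billiardGraph n p₂ p₃).Walk v v),
        w.IsCycle ∧ w.length = 4) ↔
      ((p₁ = p₂ ∨ p₂ = p₃ ∨ p₁ = p₃) ∨ (2 * p₁ = n ∨ 2 * p₂ = n ∨ 2 * p₃ = n)) :=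
  length_four_cycle_iff_isosceles_or_right_general n p₁ p₂ p₃ hp₁ hp₂ hp₃ hsum
end

section
/- Let p₁, p₂, p₃ be positive integers with n = p₁+p₂+p₃ ≥ 1 and gcd(p₁,p₂,p₃) = 1, and suppose the triangle T(p₁,p₂,p₃) is isosceles or right (i.e., p₁ = p₂ or p₂ = p₃ or p₁ = p₃, or 2p₁ = n or 2p₂ = n or 2p₃ = n). Then two of the three reflections suffice to generate the dihedral group: there exist two distinct elements x, y amongst a = sr 0, b = sr p₃, c = sr (-p₂) in DihedralGroup n such that the subgroup closure of {x, y} is the whole group. -/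
/-!
Two reflections `sr a` and `sr (a + k)` generate `DihedralGroup n` as soon as `k` is a unit of
`ZMod n`: their product is the rotation `r k`, which then generates all rotations. The three
reflections `sr 0`, `sr p₃`, `sr (-p₂)` differ pairwise by `p₃`, `p₂` and `p₁` (recall
`p₁ + p₂ + p₃ = n`), so it suffices that one `pᵢ` is coprime to `n`. For `p₁ = p₂` we have
`n = 2p₁ + p₃` with `gcd(p₁, p₃) = 1`; for `2p₁ = n` we have `n = 2(p₂ + p₃)` with
`gcd(p₂, p₃) = 1`, and whichever of `p₂`, `p₃` is odd is coprime to `n`.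
-/

open DihedralGroup

namespace DihedralGroup

variable {n : ℕ}

theorem closure_sr_sr_add_eq_top (a : ZMod n) {k : ZMod n} (hk : IsUnit k) :
    Subgroup.closure ({sr a, sr (a + k)} : Set (DihedralGroup n)) = ⊤ := by
  set H := Subgroup.closure ({sr a, sr (a + k)} : Set (DihedralGroup n))
  have ha : sr a ∈ H := Subgroup.subset_closure (by simp)
  have hrk : r k ∈ H := by
    have hak : sr (a + k) ∈ H := Subgroup.subset_closure (by simp)
    simpa [sr_mul_sr] using H.mul_mem ha hak
  have hr (j : ZMod n) : r j ∈ H := by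
    obtain ⟨u, rfl⟩ := hk
    have hj : r j = r (u : ZMod n) ^ (ZMod.cast (j * u⁻¹ : ZMod n) : ℤ) := by
      rw [r_zpow, ZMod.intCast_zmod_cast, mul_left_comm, Units.mul_inv, mul_one]
    exact hj ▸ H.zpow_mem hrk _
  refine eq_top_iff.mpr fun g _ ↦ ?_
  cases g with
  | r j => exact hr j
  | sr j => simpa [sr_mul_r] using H.mul_mem ha (hr (j - a))

theorem sr_ne_sr_add {a k : ZMod n} (hk : k ≠ 0) : sr a ≠ sr (a + k) := by
  simpa [eq_comm] using hk

end DihedralGroup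

namespace Nat

theorem Coprime.two_mul_add {a b : ℕ} (h : Coprime a b) : Coprime a (2 * a + b) :=
  (coprime_mul_right_add_right a b 2).mpr h

theorem Coprime.left_or_right_two_mul_add {a b : ℕ} (h : Coprime a b) :
    Coprime a (2 * (a + b)) ∨ Coprime b (2 * (a + b)) := by
  have hodd : Odd a ∨ Odd b := by
    by_contra! hev
    simp only [not_odd_iff_even] at hev
    have := dvd_gcd hev.1.two_dvd hev.2.two_dvd
    rw [h] at this
    omega
  rcases hodd with ha | hb
  · exact .inl <| (coprime_two_right.mpr ha).mul_right (coprime_self_add_right.mpr h)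
  · exact .inr <| (coprime_two_right.mpr hb).mul_right (coprime_add_self_right.mpr h.symm)

theorem coprime_of_isosceles_or_right {n p₁ p₂ p₃ : ℕ} (hn : n = p₁ + p₂ + p₃)
    (hgcd : gcd p₁ (gcd p₂ p₃) = 1)
    (htri : (p₁ = p₂ ∨ p₂ = p₃ ∨ p₁ = p₃) ∨ (2 * p₁ = n ∨ 2 * p₂ = n ∨ 2 * p₃ = n)) :
    Coprime p₁ n ∨ Coprime p₂ n ∨ Coprime p₃ n := by
  subst hn
  rcases htri with (rfl | rfl | rfl) | (h | h | h)
  · have h : Coprime p₁ p₃ := by simpa using hgcd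
    exact .inl (by simpa [two_mul] using h.two_mul_add)
  · have h : Coprime p₂ p₁ := by simpa [coprime_comm] using hgcd
    exact .inr <| .inl (by simpa [two_mul, add_comm, add_left_comm] using h.two_mul_add)
  · have h : Coprime p₁ p₂ := by simpa [coprime_comm] using hgcd
    exact .inl (by simpa [two_mul, add_comm, add_left_comm] using h.two_mul_add)
  · obtain rfl : p₁ = p₂ + p₃ := by omega
    have h : Coprime p₂ p₃ :=
      Coprime.eq_one_of_dvd (Coprime.symm hgcd) (dvd_add (gcd_dvd_left _ _) (gcd_dvd_right _ _))
    rw [show p₂ + p₃ + p₂ + p₃ = 2 * (p₂ + p₃) by ring]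
    exact .inr h.left_or_right_two_mul_add
  · obtain rfl : p₂ = p₁ + p₃ := by omega
    have h : Coprime p₁ p₃ := by simpa using hgcd
    rw [show p₁ + (p₁ + p₃) + p₃ = 2 * (p₁ + p₃) by ring]
    rcases h.left_or_right_two_mul_add with h | h
    · exact .inl h
    · exact .inr (.inr h)
  · obtain rfl : p₃ = p₁ + p₂ := by omega
    have h : Coprime p₁ p₂ := by simpa [coprime_comm] using hgcd
    rw [show p₁ + p₂ + (p₁ + p₂) = 2 * (p₁ + p₂) by ring]
    rcases h.left_or_right_two_mul_add with h | h
    · exact .inl h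
    · exact .inr (.inl h)

end Nat

theorem two_reflections_generate_of_isosceles_or_right_general
    (n p₁ p₂ p₃ : ℕ)
    (hp₁ : 0 < p₁) (hp₂ : 0 < p₂) (hp₃ : 0 < p₃)
    (hsum : n = p₁ + p₂ + p₃)
    (hgcd : Nat.gcd p₁ (Nat.gcd p₂ p₃) = 1)
    (htri : (p₁ = p₂ ∨ p₂ = p₃ ∨ p₁ = p₃) ∨ (2 * p₁ = n ∨ 2 * p₂ = n ∨ 2 * p₃ = n)) :
    ∃ x y : DihedralGroup n, x ≠ y ∧
      x ∈ ({sr 0, sr (p₃ : ZMod n), sr (-(p₂ : ZMod n))} : Set (DihedralGroup n)) ∧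
      y ∈ ({sr 0, sr (p₃ : ZMod n), sr (-(p₂ : ZMod n))} : Set (DihedralGroup n)) ∧
      Subgroup.closure ({x, y} : Set (DihedralGroup n)) = ⊤ := by
  have : Fact (1 < n) := ⟨by omega⟩
  have gen (a : ZMod n) {p : ℕ} (hp : p.Coprime n) :
      sr a ≠ sr (a + (p : ZMod n)) ∧ Subgroup.closure {sr a, sr (a + (p : ZMod n))} = ⊤ :=
    have hu := (ZMod.isUnit_iff_coprime p n).mpr hp
    ⟨sr_ne_sr_add hu.ne_zero, closure_sr_sr_add_eq_top a hu⟩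
  rcases Nat.coprime_of_isosceles_or_right hsum hgcd htri with h | h | h
  · obtain ⟨hne, htop⟩ := gen (p₃ : ZMod n) h
    have hn : ((p₁ + p₂ + p₃ : ℕ) : ZMod n) = 0 := hsum ▸ ZMod.natCast_self n
    rw [show (p₃ : ZMod n) + p₁ = -p₂ by push_cast at hn; linear_combination hn]
      at hne htop
    exact ⟨_, _, hne, by simp, by simp, htop⟩
  · obtain ⟨hne, htop⟩ := gen (-(p₂ : ZMod n)) h
    rw [neg_add_cancel] at hne htop
    exact ⟨_, _, hne, by simp, by simp, htop⟩
  · obtain ⟨hne, htop⟩ := gen 0 h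
    rw [zero_add] at hne htop
    exact ⟨_, _, hne, by simp, by simp, htop⟩

/-- For an isosceles or right rational triangle `T(p₁,p₂,p₃)`, two of the three reflections
`a = sr 0`, `b = sr p₃`, `c = sr (-p₂)` suffice to generate `DihedralGroup n`. -/
theorem two_reflections_generate_of_isosceles_or_right
    (n p₁ p₂ p₃ : ℕ) (hn : 1 ≤ n)
    (hp₁ : 0 < p₁) (hp₂ : 0 < p₂) (hp₃ : 0 < p₃)
    (hsum : n = p₁ + p₂ + p₃)
    (hgcd : Nat.gcd p₁ (Nat.gcd p₂ p₃) = 1)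
    (htri : (p₁ = p₂ ∨ p₂ = p₃ ∨ p₁ = p₃) ∨ (2 * p₁ = n ∨ 2 * p₂ = n ∨ 2 * p₃ = n)) :
    ∃ x y : DihedralGroup n, x ≠ y ∧
      x ∈ ({sr 0, sr (p₃ : ZMod n), sr (-(p₂ : ZMod n))} : Set (DihedralGroup n)) ∧
      y ∈ ({sr 0, sr (p₃ : ZMod n), sr (-(p₂ : ZMod n))} : Set (DihedralGroup n)) ∧
      Subgroup.closure ({x, y} : Set (DihedralGroup n)) = ⊤ :=
  two_reflections_generate_of_isosceles_or_right_general n p₁ p₂ p₃ hp₁ hp₂ hp₃ hsum hgcd htri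
end

section
/- Let p₁, p₂, p₃ be positive integers with n = p₁+p₂+p₃ ≥ 1 and gcd(p₁,p₂,p₃) = 1. Then the three reflections a = sr 0, b = sr p₃, c = sr (-p₂) generate DihedralGroup n: the subgroup closure of {a, b, c} is the whole group (of order 2n). -/
open DihedralGroup

/-!
Products of two of the reflections are the rotations `r p₃ = a b`, `r p₂ = c a` and
`r p₁ = b c` (the last because `n = 0` in `ZMod n`). Powers of `r 1` lying in a subgroup have
exponents closed under `gcd` by Bézout, so `r 1 = r 1 ^ gcd(p₁, p₂, p₃)` is generated; together
with the reflection `a = sr 0` it generates the whole dihedral group.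
-/

theorem Subgroup.pow_gcd_mem {G : Type*} [Group G] (H : Subgroup G) {g : G} {a b : ℕ}
    (ha : g ^ a ∈ H) (hb : g ^ b ∈ H) : g ^ a.gcd b ∈ H := by
  have hbezout : g ^ a.gcd b = (g ^ a) ^ a.gcdA b * (g ^ b) ^ a.gcdB b := by
    rw [← zpow_natCast, Nat.gcd_eq_gcd_ab, zpow_add, ← zpow_natCast, ← zpow_natCast,
      ← zpow_mul, ← zpow_mul]
  exact hbezout ▸ H.mul_mem (H.zpow_mem ha _) (H.zpow_mem hb _)

namespace DihedralGroup

variable {n : ℕ}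

theorem closure_r_one_sr_zero :
    Subgroup.closure ({r 1, sr 0} : Set (DihedralGroup n)) = ⊤ := by
  set H := Subgroup.closure ({r 1, sr 0} : Set (DihedralGroup n))
  have hr : ∀ i : ZMod n, r i ∈ H := fun i => by
    rw [← ZMod.intCast_zmod_cast i, ← r_one_zpow]
    exact H.zpow_mem (Subgroup.subset_closure (by simp)) _
  have hsr : sr 0 ∈ H := Subgroup.subset_closure (by simp)
  rw [eq_top_iff]
  rintro (i | i) -
  · exact hr i
  · simpa only [sr_mul_r, zero_add] using H.mul_mem hsr (hr i)

end DihedralGroup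

theorem three_reflections_generate_general (n p₁ p₂ p₃ : ℕ)
    (hsum : n = p₁ + p₂ + p₃)
    (hgcd : Nat.gcd p₁ (Nat.gcd p₂ p₃) = 1) :
    Subgroup.closure ({sr 0, sr (p₃ : ZMod n), sr (-(p₂ : ZMod n))} :
      Set (DihedralGroup n)) = ⊤ := by
  set H := Subgroup.closure ({sr 0, sr (p₃ : ZMod n), sr (-(p₂ : ZMod n))} :
    Set (DihedralGroup n))
  have ha : sr 0 ∈ H := Subgroup.subset_closure (by simp)
  have hb : sr (p₃ : ZMod n) ∈ H := Subgroup.subset_closure (by simp)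
  have hc : sr (-(p₂ : ZMod n)) ∈ H := Subgroup.subset_closure (by simp)
  have hpow₁ : (r 1 : DihedralGroup n) ^ p₁ ∈ H := by
    have hp₁_eq : (p₁ : ZMod n) = -p₂ - p₃ := by
      have h0 : ((p₁ + p₂ + p₃ : ℕ) : ZMod n) = 0 := hsum ▸ ZMod.natCast_self n
      push_cast at h0
      linear_combination h0
    simpa only [r_one_pow, sr_mul_sr, hp₁_eq] using H.mul_mem hb hc
  have hpow₂ : (r 1 : DihedralGroup n) ^ p₂ ∈ H := by
    simpa only [r_one_pow, sr_mul_sr, sub_neg_eq_add, zero_add] using H.mul_mem hc ha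
  have hpow₃ : (r 1 : DihedralGroup n) ^ p₃ ∈ H := by
    simpa only [r_one_pow, sr_mul_sr, sub_zero] using H.mul_mem ha hb
  have hr : r 1 ∈ H := by
    simpa only [hgcd, pow_one] using H.pow_gcd_mem hpow₁ (H.pow_gcd_mem hpow₂ hpow₃)
  rw [eq_top_iff, ← closure_r_one_sr_zero, Subgroup.closure_le, Set.insert_subset_iff,
    Set.singleton_subset_iff]
  exact ⟨hr, ha⟩

/-- The three reflections `a = sr 0`, `b = sr p₃`, `c = sr (-p₂)` coming from the sides of the
rational triangle `T(p₁,p₂,p₃)` generate `DihedralGroup n`, where `n = p₁ + p₂ + p₃`. -/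
theorem three_reflections_generate (n p₁ p₂ p₃ : ℕ) (hn : 1 ≤ n)
    (hp₁ : 0 < p₁) (hp₂ : 0 < p₂) (hp₃ : 0 < p₃)
    (hsum : n = p₁ + p₂ + p₃)
    (hgcd : Nat.gcd p₁ (Nat.gcd p₂ p₃) = 1) :
    Subgroup.closure ({sr 0, sr (p₃ : ZMod n), sr (-(p₂ : ZMod n))} :
      Set (DihedralGroup n)) = ⊤ :=
  three_reflections_generate_general n p₁ p₂ p₃ hsum hgcd
end
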